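/- DEC equals FEM locally (content of Theorem 4.7 combined with the identity dᵢ = eᵢ/lᵢ): let t = x₀x₁x₂ be an acute triangle in the Euclidean plane, u : ℝ² → ℝ affine with values uᵢ = u(xᵢ), and φ₀ the barycentric coordinate function of x₀. Then ∫_t ⟪∇u, ∇φ₀⟫ dx = −(e₂/l₂)·u₁ + (e₁/l₁ + e₂/l₂)·u₀ − (e₁/l₁)·u₂, where eᵢ is the distance from the circumcenter to the midpoint of the side opposite xᵢ and lᵢ is the length of that side. -/

import Mathlib

/-!
The integrand is constant, so the left side is `area t * ⟪g, ∇φ₀⟫` with `area t = |D| / 2`, where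
`D` is the cross product of two edge vectors. Solving `⟪∇φ₀, x₀ - x₁⟫ = ⟪∇φ₀, x₀ - x₂⟫ = 1` gives
`D² ∇φ₀ = ⟪x₀ - x₂, x₁ - x₂⟫ (x₀ - x₁) + ⟪x₀ - x₁, x₂ - x₁⟫ (x₀ - x₂)`, the cotangent formula.
On the other side, equidistance of `C` from the vertices gives
`⟪C - m₂, x₀ - x₂⟫ = ⟪C - m₂, x₁ - x₂⟫ = -⟪x₀ - x₂, x₁ - x₂⟫ / 2`, and the planar identity
`cross(a, b)² ‖v‖² = ‖⟪v, a⟫ b - ⟪v, b⟫ a‖²` turns this into `2 |D| e₂ = |⟪x₀ - x₂, x₁ - x₂⟫| l₂`,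
i.e. `e₂ / l₂ = cot θ₂ / 2`; acuteness fixes the sign. The same holds for `e₁ / l₁`.
-/

open EuclideanGeometry Real MeasureTheory Set
open scoped RealInnerProductSpace Pointwise

local notation "ℝ²" => EuclideanSpace ℝ (Fin 2)

def cross (a b : ℝ²) : ℝ := a 0 * b 1 - a 1 * b 0

lemma inner_fin_two (x y : ℝ²) : ⟪x, y⟫ = x 0 * y 0 + x 1 * y 1 := by
  simp [PiLp.inner_apply, Fin.sum_univ_two, mul_comm]

lemma norm_sq_fin_two (x : ℝ²) : ‖x‖ ^ 2 = x 0 ^ 2 + x 1 ^ 2 := by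
  simp [EuclideanSpace.real_norm_sq_eq, Fin.sum_univ_two]

lemma basisFun_det_eq_cross (a b : ℝ²) :
    (EuclideanSpace.basisFun (Fin 2) ℝ).toBasis.det ![a, b] = cross a b := by
  simp [Module.Basis.det_apply, Matrix.det_fin_two, cross, Module.Basis.toMatrix_apply, mul_comm]

lemma cross_ne_zero_of_linearIndependent {a b : ℝ²} (h : LinearIndependent ℝ ![a, b]) :
    cross a b ≠ 0 := by
  have hdet := ((EuclideanSpace.basisFun (Fin 2) ℝ).toBasis.is_basis_iff_det).mp
    ⟨h, h.span_eq_top_of_card_eq_finrank (by simp)⟩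
  exact basisFun_det_eq_cross a b ▸ hdet.ne_zero

lemma linearIndependent_sub_of_affineIndependent {k V : Type*} [CommRing k] [AddCommGroup V]
    [Module k V] {x₀ x₁ x₂ : V} (h : AffineIndependent k ![x₀, x₁, x₂]) :
    LinearIndependent k ![x₁ - x₀, x₂ - x₀] := by
  refine LinearIndependent.pair_iff.mpr fun s t hst => ?_
  have := h.eq_zero_of_sum_eq_zero (s := Finset.univ) (w := ![-(s + t), s, t])
    (by simp [Fin.sum_univ_three]) (by simp [Fin.sum_univ_three]; rw [← hst]; module)
  exact ⟨this 1 (by simp), this 2 (by simp)⟩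

lemma inner_vsub_vsub_nonneg_of_angle_le_pi_div_two {V P : Type*} [NormedAddCommGroup V]
    [InnerProductSpace ℝ V] [MetricSpace P] [NormedAddTorsor V P] {p q r : P}
    (h : ∠ p r q ≤ π / 2) : 0 ≤ ⟪p -ᵥ r, q -ᵥ r⟫ := by
  rw [← InnerProductGeometry.cos_angle_mul_norm_mul_norm]
  refine mul_nonneg (cos_nonneg_of_mem_Icc ⟨?_, h⟩) (by positivity)
  linarith [InnerProductGeometry.angle_nonneg (p -ᵥ r) (q -ᵥ r), pi_pos]

lemma volume_stdTriangle_prod :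
    volume {p : ℝ × ℝ | 0 ≤ p.1 ∧ 0 ≤ p.2 ∧ p.1 + p.2 ≤ 1} = ENNReal.ofReal (1 / 2) := by
  have hmeas : MeasurableSet {p : ℝ × ℝ | 0 ≤ p.1 ∧ 0 ≤ p.2 ∧ p.1 + p.2 ≤ 1} :=
    (measurableSet_le measurable_const measurable_fst).inter
      ((measurableSet_le measurable_const measurable_snd).inter
        (measurableSet_le (measurable_fst.add measurable_snd) measurable_const))
  have hslice : ∀ x : ℝ,
      volume (Prod.mk x ⁻¹' {p : ℝ × ℝ | 0 ≤ p.1 ∧ 0 ≤ p.2 ∧ p.1 + p.2 ≤ 1}) =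
        (Icc 0 1).indicator (fun x => ENNReal.ofReal (1 - x)) x := by
    intro x
    by_cases hx : x ∈ Icc (0 : ℝ) 1
    · rw [indicator_of_mem hx, ← sub_zero (1 - x), ← Real.volume_Icc]
      congr 1
      ext y
      simp only [mem_preimage, mem_ofPred_eq, mem_Icc]
      constructor
      · rintro ⟨-, h₂, h₃⟩; exact ⟨h₂, by linarith⟩
      · rintro ⟨h₂, h₃⟩; exact ⟨hx.1, h₂, by linarith⟩
    · rw [indicator_of_notMem hx, measure_eq_zero_iff_ae_notMem]
      exact Filter.Eventually.of_forall fun y ⟨h₁, h₂, h₃⟩ => hx ⟨h₁, by linarith⟩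
  rw [Measure.volume_eq_prod, Measure.prod_apply hmeas]
  simp_rw [hslice]
  rw [lintegral_indicator measurableSet_Icc, ← ofReal_integral_eq_lintegral_ofReal,
    integral_Icc_eq_integral_Ioc, ← intervalIntegral.integral_of_le zero_le_one,
    intervalIntegral.integral_sub intervalIntegrable_const intervalIntegral.intervalIntegrable_id]
  · norm_num
  · exact (continuous_const.sub continuous_id).integrableOn_Icc
  · filter_upwards [ae_restrict_mem measurableSet_Icc] with x hx
    simpa using hx.2

lemma volume_stdTriangle :
    volume {y : ℝ² | 0 ≤ y 0 ∧ 0 ≤ y 1 ∧ y 0 + y 1 ≤ 1} = ENNReal.ofReal (1 / 2) := by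
  rw [← volume_stdTriangle_prod]
  exact MeasurePreserving.measure_preimage_equiv
    (f := (MeasurableEquiv.toLp 2 (Fin 2 → ℝ)).symm.trans MeasurableEquiv.finTwoArrow)
    ((volume_preserving_finTwoArrow ℝ).comp
      (EuclideanSpace.volume_preserving_symm_measurableEquiv_toLp (Fin 2)))
    {p : ℝ × ℝ | 0 ≤ p.1 ∧ 0 ≤ p.2 ∧ p.1 + p.2 ≤ 1}

lemma convexHull_stdTriangle :
    convexHull ℝ {0, EuclideanSpace.single 0 1, EuclideanSpace.single 1 1} =
      {y : ℝ² | 0 ≤ y 0 ∧ 0 ≤ y 1 ∧ y 0 + y 1 ≤ 1} := by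
  refine Subset.antisymm (convexHull_min ?_ ?_) ?_
  · rintro p (rfl | rfl | rfl) <;> simp
  · rintro x ⟨hx₀, hx₁, hx⟩ y ⟨hy₀, hy₁, hy⟩ a b ha hb hab
    simp only [mem_ofPred_eq, PiLp.add_apply, PiLp.smul_apply, smul_eq_mul]
    exact ⟨by positivity, by positivity, by nlinarith⟩
  · rintro y ⟨h₀, h₁, h⟩
    have hy : y = ∑ i, ![1 - y 0 - y 1, y 0, y 1] i •
        ![0, EuclideanSpace.single 0 1, EuclideanSpace.single 1 1] i := by
      ext i; fin_cases i <;> simp [Fin.sum_univ_three]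
    rw [hy]
    refine (convex_convexHull ℝ _).sum_mem (fun i _ => ?_) (by simp [Fin.sum_univ_three]; ring)
      (fun i _ => subset_convexHull ℝ _ ?_)
    · fin_cases i <;> simp <;> linarith
    · fin_cases i <;> simp

theorem volume_convexHull_triangle (x₀ x₁ x₂ : ℝ²) :
    volume (convexHull ℝ {x₀, x₁, x₂}) = ENNReal.ofReal (|cross (x₁ - x₀) (x₂ - x₀)| / 2) := by
  set e := (EuclideanSpace.basisFun (Fin 2) ℝ).toBasis
  set L := e.constr ℝ ![x₁ - x₀, x₂ - x₀]
  have hL : L ∘ e = ![x₁ - x₀, x₂ - x₀] := funext (e.constr_basis ℝ _)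
  have hdet : LinearMap.det L = cross (x₁ - x₀) (x₂ - x₀) := by
    rw [← basisFun_det_eq_cross, ← hL, e.det_comp, e.det_self, mul_one]
  have hhull : convexHull ℝ {x₀, x₁, x₂} =
      x₀ +ᵥ L '' convexHull ℝ {0, EuclideanSpace.single 0 1, EuclideanSpace.single 1 1} := by
    rw [L.image_convexHull, ← convexHull_vadd]
    have h₀ : L (EuclideanSpace.single 0 1) = x₁ - x₀ := by simpa [e] using congrFun hL 0
    have h₁ : L (EuclideanSpace.single 1 1) = x₂ - x₀ := by simpa [e] using congrFun hL 1
    simp [image_insert_eq, h₀, h₁, vadd_set_insert, vadd_set_singleton]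
  rw [hhull, measure_vadd, Measure.addHaar_image_linearMap, hdet, convexHull_stdTriangle,
    volume_stdTriangle, ← ENNReal.ofReal_mul (abs_nonneg _)]
  ring_nf

lemma cross_sq_smul_eq_of_inner_eq_one {a b w : ℝ²} (ha : ⟪w, a⟫ = 1) (hb : ⟪w, b⟫ = 1) :
    cross a b ^ 2 • w = ⟪b, b - a⟫ • a + ⟪a, a - b⟫ • b := by
  rw [inner_fin_two] at ha hb
  ext i
  fin_cases i
  · simp only [Fin.zero_eta, cross, inner_fin_two, PiLp.add_apply, PiLp.smul_apply,
      PiLp.sub_apply, smul_eq_mul]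
    linear_combination (a 0 * b 1 - a 1 * b 0) * (b 1 * ha - a 1 * hb)
  · simp only [Fin.mk_one, cross, inner_fin_two, PiLp.add_apply, PiLp.smul_apply,
      PiLp.sub_apply, smul_eq_mul]
    linear_combination (a 0 * b 1 - a 1 * b 0) * (a 0 * hb - b 0 * ha)

lemma cross_sq_mul_norm_sq (a b v : ℝ²) :
    cross a b ^ 2 * ‖v‖ ^ 2 = ‖⟪v, a⟫ • b - ⟪v, b⟫ • a‖ ^ 2 := by
  simp only [norm_sq_fin_two, inner_fin_two, cross, PiLp.sub_apply, PiLp.smul_apply, smul_eq_mul]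
  ring

lemma inner_sub_midpoint_of_dist_eq {V : Type*} [NormedAddCommGroup V] [InnerProductSpace ℝ V]
    {C p q r : V} (hp : dist C p = dist C r) :
    ⟪C - midpoint ℝ p q, p - r⟫ = -⟪p - r, q - r⟫ / 2 := by
  have h : ‖(C - r) - (p - r)‖ ^ 2 = ‖C - r‖ ^ 2 := by
    rw [sub_sub_sub_cancel_right, ← dist_eq_norm, ← dist_eq_norm, hp]
  rw [norm_sub_sq_real] at h
  rw [midpoint_eq_smul_add, invOf_eq_inv,
    show C - (2⁻¹ : ℝ) • (p + q) = (C - r) - (2⁻¹ : ℝ) • ((p - r) + (q - r)) by module,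
    inner_sub_left, real_inner_smul_left, inner_add_left, real_inner_self_eq_norm_sq,
    real_inner_comm (p - r) (q - r)]
  linarith

lemma two_mul_abs_cross_mul_dist_midpoint {p q r C : ℝ²} (hp : dist C p = dist C r)
    (hq : dist C q = dist C r) :
    2 * |cross (p - r) (q - r)| * dist C (midpoint ℝ p q) = |⟪p - r, q - r⟫| * dist p q := by
  have hp' := inner_sub_midpoint_of_dist_eq (q := q) hp
  have hq' : ⟪C - midpoint ℝ p q, q - r⟫ = -⟪p - r, q - r⟫ / 2 := by
    rw [midpoint_comm, ← real_inner_comm (p - r) (q - r)]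
    exact inner_sub_midpoint_of_dist_eq hq
  have h := cross_sq_mul_norm_sq (p - r) (q - r) (C - midpoint ℝ p q)
  rw [hp', hq', ← smul_sub, sub_sub_sub_cancel_right, norm_smul, ← dist_eq_norm,
    ← dist_eq_norm, dist_comm q, Real.norm_eq_abs] at h
  refine (sq_eq_sq₀ (by positivity) (by positivity)).mp ?_
  simp only [mul_pow, sq_abs] at h ⊢
  linear_combination 4 * h

lemma dist_midpoint_div_dist_eq {p q r C : ℝ²} (hp : dist C p = dist C r)
    (hq : dist C q = dist C r) (hpqr : cross (p - r) (q - r) ≠ 0) (hangle : ∠ p r q ≤ π / 2) :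
    dist C (midpoint ℝ p q) / dist p q = ⟪p - r, q - r⟫ / (2 * |cross (p - r) (q - r)|) := by
  have hpq : p ≠ q := by
    rintro rfl
    simp [cross, mul_comm] at hpqr
  have hinner : 0 ≤ ⟪p - r, q - r⟫ := inner_vsub_vsub_nonneg_of_angle_le_pi_div_two hangle
  rw [div_eq_div_iff (dist_pos.2 hpq).ne' (by positivity), ← abs_of_nonneg hinner]
  linear_combination two_mul_abs_cross_mul_dist_midpoint hp hq

theorem dec_eq_fem_locally_general
    (x₀ x₁ x₂ C : EuclideanSpace ℝ (Fin 2))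
    (hind : AffineIndependent ℝ ![x₀, x₁, x₂])
    (h01 : dist C x₀ = dist C x₁) (h02 : dist C x₀ = dist C x₂)
    (hθ₁ : ∠ x₀ x₁ x₂ < π / 2)
    (hθ₂ : ∠ x₀ x₂ x₁ < π / 2)
    (g gφ : EuclideanSpace ℝ (Fin 2)) (c cφ : ℝ)
    (u φ₀ : EuclideanSpace ℝ (Fin 2) → ℝ)
    (hu : ∀ x, u x = ⟪g, x⟫ + c)
    (hφ : ∀ x, φ₀ x = ⟪gφ, x⟫ + cφ)
    (hφ₀ : φ₀ x₀ = 1) (hφ₁ : φ₀ x₁ = 0) (hφ₂ : φ₀ x₂ = 0) :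
    ∫ _x in convexHull ℝ {x₀, x₁, x₂}, ⟪g, gφ⟫ ∂volume =
      -(dist C (midpoint ℝ x₀ x₁) / dist x₀ x₁) * u x₁ +
        (dist C (midpoint ℝ x₀ x₂) / dist x₀ x₂ +
          dist C (midpoint ℝ x₀ x₁) / dist x₀ x₁) * u x₀ -
        dist C (midpoint ℝ x₀ x₂) / dist x₀ x₂ * u x₂ := by
  rw [setIntegral_const, measureReal_def, volume_convexHull_triangle,
    ENNReal.toReal_ofReal (by positivity), smul_eq_mul]
  set D := cross (x₁ - x₀) (x₂ - x₀)
  have hD : D ≠ 0 :=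
    cross_ne_zero_of_linearIndependent (linearIndependent_sub_of_affineIndependent hind)
  have hD₂ : cross (x₀ - x₂) (x₁ - x₂) = D := by simp only [D, cross, PiLp.sub_apply]; ring
  have hD₁ : cross (x₀ - x₁) (x₂ - x₁) = -D := by simp only [D, cross, PiLp.sub_apply]; ring
  have he₂ := dist_midpoint_div_dist_eq h02 (h01.symm.trans h02) (hD₂ ▸ hD) hθ₂.le
  have he₁ := dist_midpoint_div_dist_eq h01 (h02.symm.trans h01) (hD₁ ▸ neg_ne_zero.2 hD) hθ₁.le
  rw [hD₂] at he₂
  rw [hD₁, abs_neg] at he₁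
  have hgrad : D ^ 2 * ⟪g, gφ⟫ =
      ⟪x₀ - x₂, x₁ - x₂⟫ * ⟪g, x₀ - x₁⟫ + ⟪x₀ - x₁, x₂ - x₁⟫ * ⟪g, x₀ - x₂⟫ := by
    have h := congrArg (⟪g, ·⟫) <| cross_sq_smul_eq_of_inner_eq_one (a := x₀ - x₁) (b := x₀ - x₂)
      (w := gφ) (by rw [inner_sub_right]; linarith [hφ x₀, hφ x₁])
      (by rw [inner_sub_right]; linarith [hφ x₀, hφ x₂])
    simpa [inner_add_right, real_inner_smul_right, sub_sub_sub_cancel_left,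
      show cross (x₀ - x₁) (x₀ - x₂) = D by simp only [D, cross, PiLp.sub_apply]; ring] using h
  rw [he₁, he₂, hu, hu, hu]
  rw [inner_sub_right g x₀ x₁, inner_sub_right g x₀ x₂] at hgrad
  field_simp
  linear_combination hgrad + ⟪g, gφ⟫ * sq_abs D

/-- DEC equals FEM locally: for an acute triangle `t = x₀x₁x₂` in the Euclidean plane
with circumcenter `C`, `eᵢ` the distance from `C` to the midpoint of the side opposite
`xᵢ`, `lᵢ` the length of that side, an affine function `u x = ⟪g, x⟫ + c` with values
`uᵢ = u xᵢ`, and `φ₀` the barycentric coordinate function of `x₀`: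
`∫_t ⟪∇u, ∇φ₀⟫ dx = -(e₂/l₂) * u₁ + (e₁/l₁ + e₂/l₂) * u₀ - (e₁/l₁) * u₂`. -/
theorem dec_eq_fem_locally
    (x₀ x₁ x₂ C : EuclideanSpace ℝ (Fin 2))
    (hind : AffineIndependent ℝ ![x₀, x₁, x₂])
    (h01 : dist C x₀ = dist C x₁) (h02 : dist C x₀ = dist C x₂)
    (hθ₀ : ∠ x₁ x₀ x₂ < π / 2) (hθ₁ : ∠ x₀ x₁ x₂ < π / 2)
    (hθ₂ : ∠ x₀ x₂ x₁ < π / 2)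
    (g gφ : EuclideanSpace ℝ (Fin 2)) (c cφ : ℝ)
    (u φ₀ : EuclideanSpace ℝ (Fin 2) → ℝ)
    (hu : ∀ x, u x = ⟪g, x⟫ + c)
    (hφ : ∀ x, φ₀ x = ⟪gφ, x⟫ + cφ)
    (hφ₀ : φ₀ x₀ = 1) (hφ₁ : φ₀ x₁ = 0) (hφ₂ : φ₀ x₂ = 0) :
    ∫ _x in convexHull ℝ {x₀, x₁, x₂}, ⟪g, gφ⟫ ∂volume =
      -(dist C (midpoint ℝ x₀ x₁) / dist x₀ x₁) * u x₁ +
        (dist C (midpoint ℝ x₀ x₂) / dist x₀ x₂ +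
          dist C (midpoint ℝ x₀ x₁) / dist x₀ x₁) * u x₀ -
        dist C (midpoint ℝ x₀ x₂) / dist x₀ x₂ * u x₂ :=
  dec_eq_fem_locally_general x₀ x₁ x₂ C hind h01 h02 hθ₁ hθ₂ g gφ c cφ u φ₀ hu hφ hφ₀ hφ₁ hφ₂
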